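/- arXiv:2211.08854 — 4 statements merged into one kernel-verified Lean document; each statement's English description precedes it below -/
import Mathlib

section
/- Exact operator implementation by node varying graph filters (Proposition 4): let S ∈ ℝ^{N×N} be diagonalizable, S = V · diag(λ₁,...,λ_N) · V⁻¹ with V invertible and D distinct eigenvalues, and let B ∈ ℝ^{N×N}. For each node i, let δ_i be the i-th canonical basis vector, u_i = Vᵀδ_i, b_i = Bᵀδ_i, and let b̄_i be defined by b̄_iᵀ = δ_iᵀ B V (the i-th row of BV). Assume for all i: (1) [b̄_i]_j = 0 for every j such that [u_i]_j = 0; (2) for all j₁, j₂ with λ_{j₁} = λ_{j₂}, [u_i]_{j₁} ≠ 0 and [u_i]_{j₂} ≠ 0, it holds [b̄_i]_{j₁}/[u_i]_{j₁} = [b̄_i]_{j₂}/[u_i]_{j₂}; (3) K ≥ D. Then there exist vectors h_0, h_1, ..., h_K ∈ ℝ^N such that B = Σ_{k=0}^{K} diag(h_k) S^k, i.e., B is perfectly implemented by a node varying graph filter of order K. -/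
open Matrix Finset

/-- Exact operator implementation by node varying graph filters: for a
diagonalizable GSO `S = V diag(λ) V⁻¹` with `D` distinct eigenvalues and an
operator `B`, let `u_i = Vᵀδ_i` (so `[u_i]_j = V i j`) and `b̄_i` be defined by
`b̄_iᵀ = δ_iᵀ B V` (so `[b̄_i]_j = (B V) i j`). If (1) `[b̄_i]_j = 0` whenever
`[u_i]_j = 0`, (2) the ratios `[b̄_i]_j / [u_i]_j` agree over repeated
eigenvalues, and (3) `K ≥ D`, then `B` is perfectly implemented by a node
varying graph filter `B = ∑_{k=0}^{K} diag(h_k) S^k`. -/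
theorem node_varying_filter_exact_operator_matching
    (N K : ℕ) (S B V : Matrix (Fin N) (Fin N) ℝ) (lam : Fin N → ℝ)
    (hV : IsUnit V.det)
    (hS : S = V * Matrix.diagonal lam * V⁻¹)
    (hcond1 : ∀ i j : Fin N, V i j = 0 → (B * V) i j = 0)
    (hcond2 : ∀ i j₁ j₂ : Fin N, lam j₁ = lam j₂ → V i j₁ ≠ 0 → V i j₂ ≠ 0 →
      (B * V) i j₁ / V i j₁ = (B * V) i j₂ / V i j₂)
    (hK : K ≥ (Finset.image lam Finset.univ).card) :
    ∃ h : ℕ → Fin N → ℝ,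
      B = ∑ k ∈ Finset.range (K + 1), Matrix.diagonal (h k) * S ^ k := by
  classical
  set s : Finset ℝ := Finset.image lam Finset.univ with hs
  -- the target ratio function
  set g : Fin N → ℝ → ℝ := fun i x =>
    if hx : ∃ j : Fin N, lam j = x ∧ V i j ≠ 0 then
      (B * V) i hx.choose / V i hx.choose else 0 with hg
  -- the interpolating polynomial for each row
  set p : Fin N → Polynomial ℝ := fun i => Lagrange.interpolate s id (g i) with hp
  have hinj : Set.InjOn (id : ℝ → ℝ) s := Function.injective_id.injOn
  have hdeg : ∀ i, (p i).natDegree ≤ K := by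
    intro i
    rcases eq_or_ne (p i) 0 with h0 | h0
    · simp [h0]
    · have := Lagrange.degree_interpolate_lt (v := id) (g i) hinj
      rw [Polynomial.degree_eq_natDegree h0] at this
      have : (p i).natDegree < s.card := by exact_mod_cast this
      omega
  refine ⟨fun k i => (p i).coeff k, ?_⟩
  -- S ^ k = V * diagonal (lam ^ k) * V⁻¹
  have hSk : ∀ k : ℕ, S ^ k = V * Matrix.diagonal (fun j => lam j ^ k) * V⁻¹ := by
    intro k
    induction k with
    | zero => simp [Matrix.mul_nonsing_inv V hV]
    | succ k ih =>
      rw [pow_succ, ih, hS]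
      have key : ∀ D₁ D₂ : Matrix (Fin N) (Fin N) ℝ,
          (V * D₁ * V⁻¹) * (V * D₂ * V⁻¹) = V * (D₁ * D₂) * V⁻¹ := by
        intro D₁ D₂
        simp only [Matrix.mul_assoc, Matrix.nonsing_inv_mul_cancel_left V _ hV]
      rw [key, Matrix.diagonal_mul_diagonal]
      simp [pow_succ]
  -- Reduce to equality after multiplying by V on the right
  have hcancel : ∀ A C : Matrix (Fin N) (Fin N) ℝ, A * V = C * V → A = C := by
    intro A C h
    have := congrArg (· * V⁻¹) h
    simpa [Matrix.mul_assoc, Matrix.mul_nonsing_inv V hV] using this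
  apply hcancel
  rw [Finset.sum_mul]
  ext i j
  have hterm : ∀ k, (Matrix.diagonal (fun i => (p i).coeff k) * S ^ k * V) i j
      = (p i).coeff k * (lam j ^ k * V i j) := by
    intro k
    rw [hSk k]
    simp only [Matrix.mul_assoc]
    rw [Matrix.nonsing_inv_mul V hV, Matrix.mul_one, Matrix.diagonal_mul,
      Matrix.mul_diagonal]
    ring
  rw [Matrix.sum_apply]
  simp only [hterm]
  -- the RHS is V i j * (p i).eval (lam j)
  have hsum : ∑ k ∈ Finset.range (K + 1), (p i).coeff k * (lam j ^ k * V i j)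
      = (p i).eval (lam j) * V i j := by
    rw [Polynomial.eval_eq_sum_range' (lt_of_le_of_lt (hdeg i) (Nat.lt_succ_self K)),
      Finset.sum_mul]
    exact Finset.sum_congr rfl fun k _ => by ring
  rw [hsum]
  have hmem : lam j ∈ s := Finset.mem_image_of_mem lam (Finset.mem_univ j)
  have heval : (p i).eval (lam j) = g i (lam j) := by
    exact Lagrange.eval_interpolate_at_node (v := id) (g i) hinj hmem
  rw [heval]
  rcases eq_or_ne (V i j) 0 with h0 | h0
  · rw [h0, mul_zero, hcond1 i j h0]
  · have hx : ∃ j' : Fin N, lam j' = lam j ∧ V i j' ≠ 0 := ⟨j, rfl, h0⟩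
    rw [hg]
    simp only [dif_pos hx]
    obtain ⟨hlam, hne⟩ := hx.choose_spec
    rw [hcond2 i hx.choose j hlam hne h0, div_mul_cancel₀ _ h0]
end

section
/- Finite-time average consensus via graph convolutional filtering: let L ∈ ℝ^{N×N} be a symmetric positive semidefinite matrix (a graph Laplacian) with L·1 = 0, and suppose the eigenvalue 0 of L has multiplicity one (i.e., the kernel of L is exactly the span of the all-ones vector 1, equivalently the graph is connected). Then there exists a polynomial p with real coefficients such that p(L) = (1/N)·1·1ᵀ; consequently, for every signal x ∈ ℝ^N, applying the graph convolutional filter p(L) to x yields the vector whose every entry equals the average (1/N)Σ_{n=1}^{N} x_n. -/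
/-!
The consensus matrix `B` satisfies `L B = B L = 0` and `B² = B` because `L` annihilates the
all-ones vector on both sides. Since the kernel of `L` is spanned by that vector, `L + B` is
invertible, and by Cayley–Hamilton its inverse is `r(L + B)` for some polynomial `r`. From
`(L + B) L = L²` we get `r(L + B) L = r(L) L`, while `r(L + B) B = r(L + B) (L + B) B = B`;
expanding `r(L + B) (L + B) = 1` therefore gives `B = 1 - r(L) L`.
-/

open Matrix Finset Polynomial

theorem Polynomial.aeval_mul_eq_mul_aeval_of_mul_eq {R A : Type*} [CommSemiring R] [Semiring A]
    [Algebra R A] {a b c : A} (h : a * c = c * b) (p : R[X]) :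
    aeval a p * c = c * aeval b p := by
  induction p using Polynomial.induction_on' with
  | add p q hp hq => rw [map_add, map_add, add_mul, mul_add, hp, hq]
  | monomial k r =>
    have hpow : c * b ^ k = a ^ k * c := SemiconjBy.pow_right h.symm k
    rw [aeval_monomial, aeval_monomial, mul_assoc, ← hpow, ← mul_assoc, ← mul_assoc,
      Algebra.commutes]

theorem Polynomial.aeval_one_sub_mul_X_eq_of_aeval_add_mul_eq_one {R A : Type*} [CommRing R]
    [Ring A] [Algebra R A] {L B : A} (hLB : L * B = 0) (hBL : B * L = 0) (hBB : B * B = B)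
    {r : R[X]} (hr : aeval (L + B) r * (L + B) = 1) :
    aeval L (1 - r * X) = B := by
  have hrL : aeval (L + B) r * L = aeval L r * L := by
    rw [aeval_mul_eq_mul_aeval_of_mul_eq (by rw [add_mul, hBL, add_zero]),
      aeval_mul_eq_mul_aeval_of_mul_eq rfl]
  have hMB : (L + B) * B = B := by rw [add_mul, hLB, hBB, zero_add]
  calc aeval L (1 - r * X) = aeval (L + B) r * (L + B) - aeval (L + B) r * L := by
        simp [hr, hrL]
    _ = aeval (L + B) r * B := by noncomm_ring
    _ = aeval (L + B) r * ((L + B) * B) := by rw [hMB]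
    _ = B := by rw [← mul_assoc, hr, one_mul]

theorem Matrix.exists_aeval_mul_eq_one_of_isUnit {n R : Type*} [Fintype n] [DecidableEq n]
    [CommRing R] {M : Matrix n n R} (hM : IsUnit M) : ∃ r : R[X], aeval M r * M = 1 := by
  set c := M.charpoly.coeff 0
  have hc : IsUnit c := by
    have := (isUnit_iff_isUnit_det M).mp hM
    rw [det_eq_sign_charpoly_coeff] at this
    exact isUnit_of_mul_isUnit_right this
  have hCH : aeval M M.charpoly.divX * M = -(c • 1) := by
    have := aeval_self_charpoly M
    rw [← divX_mul_X_add M.charpoly] at this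
    simpa [Algebra.algebraMap_eq_smul_one, eq_neg_iff_add_eq_zero] using this
  refine ⟨C (-((hc.unit⁻¹ : Rˣ) : R)) * M.charpoly.divX, ?_⟩
  rw [map_mul, aeval_C, mul_assoc, hCH, Algebra.algebraMap_eq_smul_one, smul_mul_assoc, one_mul,
    smul_neg, neg_smul, neg_neg, smul_smul, hc.val_inv_mul, one_smul]

section Consensus

variable {n K : Type*} [Fintype n] [Field K]

variable (n K) in
def consensusMatrix : Matrix n n K := of fun _ _ => (Fintype.card n : K)⁻¹

theorem consensusMatrix_mulVec (x : n → K) :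
    consensusMatrix n K *ᵥ x = fun _ => (Fintype.card n : K)⁻¹ * ∑ i, x i := by
  ext
  simp [consensusMatrix, mulVec, dotProduct, Finset.mul_sum]

theorem mul_consensusMatrix_eq_zero {L : Matrix n n K} (hL : L *ᵥ 1 = 0) :
    L * consensusMatrix n K = 0 := by
  ext i j
  have hrow := congrFun hL i
  simp only [mulVec, dotProduct, Pi.one_apply, mul_one, Pi.zero_apply] at hrow
  simp [consensusMatrix, mul_apply, ← Finset.sum_mul, hrow]

theorem consensusMatrix_mul_eq_zero {L : Matrix n n K} (hL : 1 ᵥ* L = 0) :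
    consensusMatrix n K * L = 0 := by
  ext i j
  have hcol := congrFun hL j
  simp only [vecMul, dotProduct, Pi.one_apply, one_mul, Pi.zero_apply] at hcol
  simp [consensusMatrix, mul_apply, ← Finset.mul_sum, hcol]

theorem consensusMatrix_mul_self :
    consensusMatrix n K * consensusMatrix n K = consensusMatrix n K := by
  ext i j
  simp only [consensusMatrix, mul_apply, of_apply, sum_const, card_univ, nsmul_eq_mul]
  -- `c * (c⁻¹ * c⁻¹) = c⁻¹` holds also for `c = 0`, i.e. for empty `n`
  grind

theorem isUnit_add_consensusMatrix [DecidableEq n] [CharZero K] {L : Matrix n n K}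
    (hL : 1 ᵥ* L = 0)
    (hker : ∀ x : n → K, L *ᵥ x = 0 → ∃ c : K, x = fun _ => c) :
    IsUnit (L + consensusMatrix n K) := by
  rcases isEmpty_or_nonempty n with hn | hn
  · exact isUnit_of_subsingleton _
  have hcard : (Fintype.card n : K) ≠ 0 := Nat.cast_ne_zero.mpr Fintype.card_ne_zero
  rw [← mulVec_injective_iff_isUnit, ← coe_mulVecLin, injective_iff_map_eq_zero]
  intro v hv
  rw [coe_mulVecLin, add_mulVec] at hv
  have hsum : ∑ i, v i = 0 := by
    have hdot := congrArg (1 ⬝ᵥ ·) hv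
    simp only [dotProduct_add, dotProduct_mulVec, hL, zero_dotProduct, zero_add,
      consensusMatrix_mulVec, dotProduct_zero] at hdot
    simpa [dotProduct, hcard] using hdot
  have hBv : consensusMatrix n K *ᵥ v = 0 := by
    ext
    simp [consensusMatrix_mulVec, hsum]
  have hLv : L *ᵥ v = 0 := by simpa [hBv] using hv
  obtain ⟨c, rfl⟩ := hker v hLv
  funext
  simpa [hcard] using hsum

theorem exists_aeval_eq_consensusMatrix [DecidableEq n] [CharZero K] {L : Matrix n n K}
    (hrow : L *ᵥ 1 = 0) (hcol : 1 ᵥ* L = 0)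
    (hker : ∀ x : n → K, L *ᵥ x = 0 → ∃ c : K, x = fun _ => c) :
    ∃ p : K[X], aeval L p = consensusMatrix n K := by
  obtain ⟨r, hr⟩ := exists_aeval_mul_eq_one_of_isUnit (isUnit_add_consensusMatrix hcol hker)
  exact ⟨_, aeval_one_sub_mul_X_eq_of_aeval_add_mul_eq_one (mul_consensusMatrix_eq_zero hrow)
    (consensusMatrix_mul_eq_zero hcol) consensusMatrix_mul_self hr⟩

end Consensus

/-- Finite-time average consensus via graph convolutional filtering: if `L` is a
symmetric positive semidefinite graph Laplacian with `L·1 = 0` whose kernel is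
exactly the span of the all-ones vector (the eigenvalue `0` has multiplicity
one, i.e., the graph is connected), then some polynomial graph filter `p(L)`
equals the average consensus operator `(1/N)·1·1ᵀ`, hence applying it to any
signal `x` yields the constant vector of the average of `x`. -/
theorem finite_time_consensus_graph_filter
    (N : ℕ) (L : Matrix (Fin N) (Fin N) ℝ)
    (hL : L.PosSemidef)
    (hL1 : L *ᵥ (fun _ => (1 : ℝ)) = 0)
    (hker : ∀ x : Fin N → ℝ, L *ᵥ x = 0 → ∃ c : ℝ, x = fun _ => c) :
    ∃ p : Polynomial ℝ,
      Polynomial.aeval L p = Matrix.of (fun _ _ => (N : ℝ)⁻¹) ∧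
      ∀ (x : Fin N → ℝ) (i : Fin N),
        ((Polynomial.aeval L p) *ᵥ x) i = (N : ℝ)⁻¹ * ∑ n, x n := by
  have hcol : (fun _ => (1 : ℝ)) ᵥ* L = 0 := by
    rw [← mulVec_transpose, (isHermitian_iff_isSymm.mp hL.1).eq, hL1]
  obtain ⟨p, hp⟩ := exists_aeval_eq_consensusMatrix hL1 hcol hker
  refine ⟨p, by simp [hp, consensusMatrix], fun x i => ?_⟩
  simp [hp, consensusMatrix_mulVec]
end

section
/- Sufficiency of the biorthogonality conditions for perfect reconstruction in a two-channel critically-sampled graph filter bank on a bipartite graph: let L ∈ ℝ^{N×N} and let J be a diagonal matrix with J² = I such that J·L·J = 2I − L (the spectral folding property of bipartite normalized Laplacians). Let D₁ = (I + J)/2 and D₂ = (I − J)/2 be the diagonal 0/1 downsampling matrices corresponding to the two parts of the bipartition. Let h₁, h₂, g₁, g₂ be real polynomials satisfying, as polynomial identities in λ, g₁(λ)h₁(λ) + g₂(λ)h₂(λ) = 2 and g₁(λ)h₁(2−λ) − g₂(λ)h₂(2−λ) = 0. Then g₁(L)·D₁·h₁(L) + g₂(L)·D₂·h₂(L) = I,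 i.e., every signal x ∈ ℝ^N is perfectly reconstructed from the two critically-sampled channel outputs D₁h₁(L)x and D₂h₂(L)x. -/
open Polynomial

/-!
Writing `D₁ = (1 + J)/2` and `D₂ = (1 - J)/2`, the reconstruction operator splits as
`½ (g₁(L) h₁(L) + g₂(L) h₂(L)) + ½ (g₁(L) J h₁(L) - g₂(L) J h₂(L))`. The first term is `1` by
the first biorthogonality condition. Since `J² = 1`, the folding property says that `J`
intertwines `L` with `2 - L`, hence `J h(L) = h(2 - L) J` for every polynomial `h`; this turns
the second term into `(g₁ h₁(2 - ·) - g₂ h₂(2 - ·))(L) J`, which vanishes by the second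
condition.
-/

theorem SemiconjBy.of_mul_self_eq_one {M : Type*} [Monoid M] {a x y : M}
    (ha : a * a = 1) (h : a * x * a = y) : SemiconjBy a x y := by
  rw [SemiconjBy, ← h, mul_assoc _ a a, ha, mul_one]

theorem SemiconjBy.aeval {R A : Type*} [CommSemiring R] [Semiring A] [Algebra R A]
    {a x y : A} (h : SemiconjBy a x y) (p : R[X]) :
    SemiconjBy a (aeval x p) (aeval y p) := by
  induction p using Polynomial.induction_on' with
  | add p q hp hq => simpa only [map_add] using hp.add_right hq
  | monomial n c =>
    simp only [aeval_monomial]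
    exact SemiconjBy.mul_right (Algebra.commutes c a).symm (h.pow_right n)

theorem Polynomial.aeval_two_sub {R A : Type*} [CommRing R] [Ring A] [Algebra R A]
    (x : A) (p : R[X]) : aeval (2 - x) p = aeval x (p.comp (C 2 - X)) := by
  simp [aeval_comp, map_ofNat]

theorem mul_inv_two_smul_one_add_mul_add_mul_inv_two_smul_one_sub_mul {K A : Type*} [Field K]
    [Ring A] [Algebra K A] (J a b c d : A) :
    a * ((2 : K)⁻¹ • (1 + J)) * b + c * ((2 : K)⁻¹ • (1 - J)) * d
      = (2 : K)⁻¹ • ((a * b + c * d) + (a * (J * b) - c * (J * d))) := by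
  simp only [mul_smul_comm, smul_mul_assoc, mul_add, add_mul, mul_sub, sub_mul, mul_one,
    smul_add, smul_sub, mul_assoc]
  abel

theorem aeval_two_channel_filter_bank_eq_one {K A : Type*} [Field K] [NeZero (2 : K)] [Ring A]
    [Algebra K A] {L J : A} (hJ2 : J * J = 1) (hfold : J * L * J = 2 - L)
    {h₁ h₂ g₁ g₂ : K[X]} (hbio1 : g₁ * h₁ + g₂ * h₂ = C 2)
    (hbio2 : g₁ * h₁.comp (C 2 - X) - g₂ * h₂.comp (C 2 - X) = 0) :
    aeval L g₁ * ((2 : K)⁻¹ • (1 + J)) * aeval L h₁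
      + aeval L g₂ * ((2 : K)⁻¹ • (1 - J)) * aeval L h₂ = 1 := by
  have hJL : SemiconjBy J L (2 - L) := .of_mul_self_eq_one hJ2 hfold
  have hsum : aeval L g₁ * aeval L h₁ + aeval L g₂ * aeval L h₂ = (2 : K) • 1 := by
    simpa [Algebra.algebraMap_eq_smul_one] using congrArg (aeval L) hbio1
  have hdiff : aeval L g₁ * (J * aeval L h₁) - aeval L g₂ * (J * aeval L h₂) = 0 := by
    rw [(hJL.aeval h₁).eq, (hJL.aeval h₂).eq, aeval_two_sub, aeval_two_sub, ← mul_assoc,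
      ← mul_assoc, ← sub_mul]
    simpa using congrArg (fun p => aeval L p * J) hbio2
  rw [mul_inv_two_smul_one_add_mul_add_mul_inv_two_smul_one_sub_mul, hsum, hdiff, add_zero,
    smul_smul, inv_mul_cancel₀ two_ne_zero, one_smul]

theorem two_channel_bipartite_filter_bank_perfect_reconstruction_general
    (N : ℕ) (L J : Matrix (Fin N) (Fin N) ℝ)
    (hJ2 : J * J = 1)
    (hfold : J * L * J = 2 • (1 : Matrix (Fin N) (Fin N) ℝ) - L)
    (h₁ h₂ g₁ g₂ : Polynomial ℝ)
    (hbio1 : g₁ * h₁ + g₂ * h₂ = Polynomial.C 2)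
    (hbio2 : g₁ * (h₁.comp (Polynomial.C 2 - Polynomial.X))
           - g₂ * (h₂.comp (Polynomial.C 2 - Polynomial.X)) = 0) :
    Polynomial.aeval L g₁ * ((2 : ℝ)⁻¹ • (1 + J)) * Polynomial.aeval L h₁
      + Polynomial.aeval L g₂ * ((2 : ℝ)⁻¹ • (1 - J)) * Polynomial.aeval L h₂
      = 1 :=
  aeval_two_channel_filter_bank_eq_one hJ2 (by rwa [two_nsmul, ← two_mul, mul_one] at hfold)
    hbio1 hbio2

/-- Sufficiency of the biorthogonality conditions for perfect reconstruction in
a two-channel critically-sampled graph filter bank on a bipartite graph: if `J`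
is a diagonal matrix with `J² = I` satisfying the spectral folding property
`J L J = 2I − L`, `D₁ = (I + J)/2` and `D₂ = (I − J)/2` are the downsampling
matrices, and the analysis/synthesis polynomials satisfy
`g₁(λ)h₁(λ) + g₂(λ)h₂(λ) = 2` and `g₁(λ)h₁(2−λ) − g₂(λ)h₂(2−λ) = 0` as
polynomial identities, then `g₁(L) D₁ h₁(L) + g₂(L) D₂ h₂(L) = I`. -/
theorem two_channel_bipartite_filter_bank_perfect_reconstruction
    (N : ℕ) (L J : Matrix (Fin N) (Fin N) ℝ) (j : Fin N → ℝ)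
    (hJdiag : J = Matrix.diagonal j)
    (hJ2 : J * J = 1)
    (hfold : J * L * J = 2 • (1 : Matrix (Fin N) (Fin N) ℝ) - L)
    (h₁ h₂ g₁ g₂ : Polynomial ℝ)
    (hbio1 : g₁ * h₁ + g₂ * h₂ = Polynomial.C 2)
    (hbio2 : g₁ * (h₁.comp (Polynomial.C 2 - Polynomial.X))
           - g₂ * (h₂.comp (Polynomial.C 2 - Polynomial.X)) = 0) :
    Polynomial.aeval L g₁ * ((2 : ℝ)⁻¹ • (1 + J)) * Polynomial.aeval L h₁
      + Polynomial.aeval L g₂ * ((2 : ℝ)⁻¹ • (1 - J)) * Polynomial.aeval L h₂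
      = 1 :=
  two_channel_bipartite_filter_bank_perfect_reconstruction_general N L J hJ2 hfold h₁ h₂ g₁ g₂ hbio1
    hbio2
end

section
/- Permutation equivariance of graph convolutional neural networks: let σ: ℝ → ℝ be any function applied entrywise to vectors (a pointwise activation), and consider an L-layer GNN Φ(S, x) defined by x₀ = x and x_ℓ = σ(Σ_{k=0}^{K} h_{ℓ,k} S^k x_{ℓ−1}) for ℓ = 1,...,L, with output Φ(S,x) = x_L, where h_{ℓ,k} ∈ ℝ are fixed filter parameters per layer. Then for any N×N permutation matrix P (the matrix of a permutation of {1,...,N}), any S ∈ ℝ^{N×N} and any x ∈ ℝ^N, Φ(PᵀSP, Pᵀx) = Pᵀ·Φ(S, x). -/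
open Matrix Finset

/-- An `L`-layer graph convolutional neural network: `gcnn act K h S 0 x = x`
and `gcnn act K h S (ℓ+1) x = σ(∑_{k=0}^{K} h_{ℓ+1,k} S^k (gcnn act K h S ℓ x))`,
where the activation `act` is applied entrywise and `h ℓ k` is the `k`-th
filter parameter of layer `ℓ`. -/
def gcnn {N : ℕ} (act : ℝ → ℝ) (K : ℕ) (h : ℕ → ℕ → ℝ)
    (S : Matrix (Fin N) (Fin N) ℝ) : ℕ → (Fin N → ℝ) → (Fin N → ℝ)
  | 0, x => x
  | (l + 1), x => fun i =>
      act (((∑ k ∈ Finset.range (K + 1), h (l + 1) k • S ^ k) *ᵥ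
        gcnn act K h S l x) i)

/-! Conjugating by a permutation matrix relabels the nodes, and a graph filter, being a
polynomial in `S`, commutes with relabelling; the pointwise activation commutes with any
relabelling, so induction on the number of layers gives equivariance. -/

namespace Equiv.Perm

variable {n R : Type*} [DecidableEq n] (σ : Equiv.Perm n)

theorem permMatrix_eq_of [Zero R] [One R] :
    σ.permMatrix R = Matrix.of fun i j => if σ i = j then 1 else 0 := by
  ext i j
  simp [PEquiv.toMatrix_apply]

variable [Fintype n] [NonAssocSemiring R]

theorem transpose_permMatrix_mul_mul_permMatrix (A : Matrix n n R) :
    (σ.permMatrix R)ᵀ * A * σ.permMatrix R = A.submatrix σ.symm σ.symm := by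
  rw [← PEquiv.toMatrix_symm, ← Equiv.toPEquiv_symm, PEquiv.toMatrix_toPEquiv_mul,
    PEquiv.mul_toMatrix_toPEquiv, submatrix_submatrix]
  rfl

theorem transpose_permMatrix_mulVec (v : n → R) :
    (σ.permMatrix R)ᵀ *ᵥ v = v ∘ σ.symm := by
  rw [← PEquiv.toMatrix_symm, ← Equiv.toPEquiv_symm, PEquiv.toMatrix_toPEquiv_mulVec]

end Equiv.Perm

theorem Matrix.sum_smul_pow_submatrix {n R : Type*} [Fintype n] [DecidableEq n] [CommSemiring R]
    (e : n ≃ n) (c : ℕ → R) (s : Finset ℕ) (S : Matrix n n R) :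
    ∑ k ∈ s, c k • (S.submatrix e e) ^ k = (∑ k ∈ s, c k • S ^ k).submatrix e e := by
  have hS : S.submatrix e e = reindexAlgEquiv R R e.symm S := rfl
  rw [hS]
  simp only [← map_pow, ← map_smul, ← map_sum]
  rfl

theorem gcnn_submatrix {N : ℕ} (act : ℝ → ℝ) (K : ℕ) (h : ℕ → ℕ → ℝ)
    (S : Matrix (Fin N) (Fin N) ℝ) (e : Equiv.Perm (Fin N)) (L : ℕ) (x : Fin N → ℝ) :
    gcnn act K h (S.submatrix e e) L (x ∘ e) = gcnn act K h S L x ∘ e := by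
  induction L with
  | zero => rfl
  | succ L ih =>
    funext i
    simp only [gcnn, ih, sum_smul_pow_submatrix, submatrix_mulVec_equiv, Function.comp_assoc,
      Equiv.self_comp_symm, Function.comp_id, Function.comp_apply]

/-- Permutation equivariance of graph convolutional neural networks: for any
pointwise activation `act`, any filter parameters, any permutation matrix `P`
(the matrix of a permutation `σ` of the nodes), any GSO `S` and signal `x`,
the GNN run on the permuted graph `PᵀSP` with permuted input `Pᵀx` outputs the
permutation `Pᵀ Φ(S, x)` of the original output. -/
theorem gcnn_permutation_equivariance
    (N K L : ℕ) (act : ℝ → ℝ) (h : ℕ → ℕ → ℝ)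
    (σ : Equiv.Perm (Fin N)) (P S : Matrix (Fin N) (Fin N) ℝ)
    (hP : P = Matrix.of fun i j => if σ i = j then (1 : ℝ) else 0)
    (x : Fin N → ℝ) :
    gcnn act K h (Pᵀ * S * P) L (Pᵀ *ᵥ x) = Pᵀ *ᵥ gcnn act K h S L x := by
  rw [hP, ← σ.permMatrix_eq_of, σ.transpose_permMatrix_mul_mul_permMatrix,
    σ.transpose_permMatrix_mulVec, σ.transpose_permMatrix_mulVec]
  exact gcnn_submatrix act K h S σ.symm L x
end
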